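/- Let A ∈ {ℤ, ℝ} and let K, X ⊆ ℝ^d be d-dimensional convex bodies (convex bodies whose affine hull is all of ℝ^d). If the lattice width of K equals the generalised flatness constant Flt_d^A(X), then K contains an A-unimodular copy of X. -/

import Mathlib

open Set Pointwise

noncomputable section

/-- The set of real numbers that are integers (the ring ℤ viewed inside ℝ). -/
def ZSet : Set ℝ := Set.range (fun z : ℤ => (z : ℝ))

/-- `T : ℝ^d → ℝ^d` is an affine `A`-unimodular transformation: `T x = M x + b` with
`M` an integer matrix of determinant `±1` and `b ∈ A^d`. -/
def IsUnimodularMap {d : ℕ} (A : Set ℝ) (T : (Fin d → ℝ) → (Fin d → ℝ)) : Prop :=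
  ∃ (M : Matrix (Fin d) (Fin d) ℤ) (b : Fin d → ℝ),
    (M.det = 1 ∨ M.det = -1) ∧ (∀ i, b i ∈ A) ∧
    ∀ x, T x = (M.map (fun z : ℤ => (z : ℝ))).mulVec x + b

/-- `Y` is an `A`-unimodular copy of `X`. -/
def IsUnimodCopy {d : ℕ} (A : Set ℝ) (X Y : Set (Fin d → ℝ)) : Prop :=
  ∃ T, IsUnimodularMap A T ∧ Y = T '' X

/-- `K` contains an `A`-unimodular copy of `X`. -/
def ContainsCopy {d : ℕ} (A : Set ℝ) (X K : Set (Fin d → ℝ)) : Prop :=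
  ∃ Y, IsUnimodCopy A X Y ∧ Y ⊆ K

/-- `K` is `A`-`X`-free: its relative interior contains no `A`-unimodular copy of `X`. -/
def IsFree {d : ℕ} (A : Set ℝ) (X K : Set (Fin d → ℝ)) : Prop :=
  ∀ Y, IsUnimodCopy A X Y → ¬ Y ⊆ intrinsicInterior ℝ K

/-- A convex body: a nonempty compact convex set. -/
def IsConvexBody {d : ℕ} (K : Set (Fin d → ℝ)) : Prop :=
  Convex ℝ K ∧ IsCompact K ∧ K.Nonempty

/-- A polytope: the convex hull of a finite set of points. -/
def IsPolytope {d : ℕ} (K : Set (Fin d → ℝ)) : Prop :=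
  ∃ F : Set (Fin d → ℝ), F.Finite ∧ K = convexHull ℝ F

/-- The width of `K` along the integer linear functional `u`. -/
def widthAlong {d : ℕ} (u : Fin d → ℤ) (K : Set (Fin d → ℝ)) : ℝ :=
  sSup {w | ∃ x ∈ K, ∃ y ∈ K, w = |(∑ i, (u i : ℝ) * x i) - ∑ i, (u i : ℝ) * y i|}

/-- The lattice width of `K`: the infimum of its widths along nonzero integer functionals. -/
def latticeWidth {d : ℕ} (K : Set (Fin d → ℝ)) : ℝ :=
  sInf {w | ∃ u : Fin d → ℤ, u ≠ 0 ∧ w = widthAlong u K}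

/-- The generalised flatness constant `Flt_d^A(X)`: the supremum of the lattice widths of all
convex bodies containing no `A`-unimodular copy of `X`. -/
def Flt (d : ℕ) (A : Set ℝ) (X : Set (Fin d → ℝ)) : ℝ :=
  sSup {w | ∃ K : Set (Fin d → ℝ), IsConvexBody K ∧ ¬ ContainsCopy A X K ∧ w = latticeWidth K}

/-- The affine dimension of a set: the dimension of the direction of its affine span. -/
def affDim {d : ℕ} (s : Set (Fin d → ℝ)) : ℕ :=
  Module.finrank ℝ (affineSpan ℝ s).direction

/-- Minkowski difference `K ÷ S = {x | S + x ⊆ K}`. -/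
def mDiff {d : ℕ} (K S : Set (Fin d → ℝ)) : Set (Fin d → ℝ) :=
  {x | ∀ s ∈ S, s + x ∈ K}

/-- The standard triangle `Δ₂ = conv{(0,0), (1,0), (0,1)} ⊆ ℝ²`. -/
def stdSimplex2 : Set (Fin 2 → ℝ) := convexHull ℝ {![0, 0], ![1, 0], ![0, 1]}

/-! If `K` contained no copy of `X`, neither would its image `K_t` under some homothety of ratio
`t > 1` centred in `K`. Indeed, copies inside every `K_(1 + 1/(n+1))` yield one inside their
intersection `K`: since `X` has interior points, the linear parts of these copies are integer
matrices with bounded entries, so one of them recurs infinitely often, and its admissible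
translation vectors then form a nested sequence of nonempty compact sets. But `K_t` has lattice
width `t · width(K) > width(K) = Flt`, contradicting the definition of `Flt` as a supremum. -/

section Homothety

open AffineMap Filter Topology

variable {E : Type*} [AddCommGroup E] [Module ℝ E]

theorem Convex.image_homothety_subset {K : Set E} (hK : Convex ℝ K) {c : E} (hc : c ∈ K) {t : ℝ}
    (ht : t ∈ Icc (0 : ℝ) 1) : homothety c t '' K ⊆ K := by
  rintro _ ⟨x, hx, rfl⟩
  exact hK.lineMap_mem hc hx ht

theorem Convex.image_homothety_mono {K : Set E} (hK : Convex ℝ K) {c : E} (hc : c ∈ K) {s t : ℝ}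
    (hs : 0 ≤ s) (hst : s ≤ t) : homothety c s '' K ⊆ homothety c t '' K := by
  obtain rfl | ht := (hs.trans hst).eq_or_lt
  · rw [le_antisymm hst hs]
  have hcomp : homothety c s = (homothety c t).comp (homothety c (s / t)) := by
    rw [← homothety_mul, mul_div_cancel₀ _ ht.ne']
  rw [hcomp, coe_comp, image_comp]
  exact image_mono <|
    hK.image_homothety_subset hc ⟨div_nonneg hs ht.le, div_le_one_of_le₀ hst ht.le⟩

theorem IsClosed.iInter_image_homothety_subset [TopologicalSpace E] [IsTopologicalAddGroup E]
    [ContinuousSMul ℝ E] {K : Set E} (hK : IsClosed K) (c : E) {t : ℕ → ℝ}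
    (ht : Tendsto t atTop (𝓝 1)) : ⋂ n, homothety c (t n) '' K ⊆ K := by
  intro z hz
  have hmem : ∀ᶠ n in atTop, homothety c (t n)⁻¹ z ∈ K := by
    filter_upwards [ht.eventually_ne one_ne_zero] with n hn
    obtain ⟨y, hy, rfl⟩ := mem_iInter.1 hz n
    rwa [← homothety_mul_apply, inv_mul_cancel₀ hn, homothety_one, id_apply]
  have hlim : Tendsto (fun n => homothety c (t n)⁻¹ z) atTop (𝓝 z) := by
    simpa [homothety_apply] using ((ht.inv₀ one_ne_zero).smul_const (z - c)).add_const c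
  exact hK.mem_of_tendsto hlim hmem

end Homothety

section

open AffineMap Filter Matrix Metric Topology

variable {d : ℕ}

theorem containsCopy_iff {A : Set ℝ} {X K : Set (Fin d → ℝ)} :
    ContainsCopy A X K ↔ ∃ (M : Matrix (Fin d) (Fin d) ℤ) (b : Fin d → ℝ),
      (M.det = 1 ∨ M.det = -1) ∧ (∀ i, b i ∈ A) ∧
      MapsTo (fun x => M.map (fun z : ℤ => (z : ℝ)) *ᵥ x + b) X K := by
  constructor
  · rintro ⟨_, ⟨T, ⟨M, b, hdet, hb, hT⟩, rfl⟩, hsub⟩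
    exact ⟨M, b, hdet, hb, fun x hx => by simpa only [hT] using hsub (mem_image_of_mem T hx)⟩
  · rintro ⟨M, b, hdet, hb, hmaps⟩
    exact ⟨_, ⟨_, ⟨M, b, hdet, hb, fun _ => rfl⟩, rfl⟩, hmaps.image_subset⟩

theorem ContainsCopy.mono {A : Set ℝ} {X K K' : Set (Fin d → ℝ)} (h : ContainsCopy A X K)
    (hKK' : K ⊆ K') : ContainsCopy A X K' :=
  let ⟨Y, hY, hYK⟩ := h
  ⟨Y, hY, hYK.trans hKK'⟩

theorem containsCopy_of_fin_zero (A : Set ℝ) (X : Set (Fin 0 → ℝ)) {K : Set (Fin 0 → ℝ)}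
    (hK : K.Nonempty) : ContainsCopy A X K := by
  obtain ⟨k, hk⟩ := hK
  exact containsCopy_iff.2 ⟨1, 0, Or.inl det_one, finZeroElim, fun _ _ => by convert hk⟩

theorem isClosed_ZSet : IsClosed ZSet :=
  Int.isClosedEmbedding_coe_real.isClosed_range

theorem widthAlong_eq_sSup_image2 (u : Fin d → ℤ) (K : Set (Fin d → ℝ)) :
    widthAlong u K = sSup (image2 (fun x y => |(fun i => (u i : ℝ)) ⬝ᵥ (x - y)|) K K) := by
  simp only [widthAlong, dotProduct_sub]
  congr 1
  ext w
  simp [dotProduct, eq_comm]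

theorem le_widthAlong (u : Fin d → ℤ) {K : Set (Fin d → ℝ)} (hK : IsCompact K) {x y : Fin d → ℝ}
    (hx : x ∈ K) (hy : y ∈ K) : |(fun i => (u i : ℝ)) ⬝ᵥ (x - y)| ≤ widthAlong u K := by
  rw [widthAlong_eq_sSup_image2, ← image_prod]
  refine le_csSup (IsCompact.bddAbove ((hK.prod hK).image ?_)) ⟨(x, y), ⟨hx, hy⟩, rfl⟩
  fun_prop

theorem widthAlong_homothety (u : Fin d → ℤ) (c : Fin d → ℝ) {t : ℝ} (ht : 0 ≤ t)
    (K : Set (Fin d → ℝ)) : widthAlong u (homothety c t '' K) = t * widthAlong u K := by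
  have hscale : ∀ x y, homothety c t x - homothety c t y = t • (x - y) := fun x y => by
    simp only [homothety_apply, vsub_eq_sub, vadd_eq_add]
    module
  simp only [widthAlong_eq_sSup_image2, image2_image_left, image2_image_right, hscale,
    dotProduct_smul, smul_eq_mul, abs_mul, abs_of_nonneg ht]
  rw [← smul_eq_mul, ← Real.sSup_smul_of_nonneg ht, ← image_smul, image_image2]
  rfl

theorem latticeWidth_homothety (c : Fin d → ℝ) {t : ℝ} (ht : 0 ≤ t) (K : Set (Fin d → ℝ)) :
    latticeWidth (homothety c t '' K) = t * latticeWidth K := by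
  simp only [latticeWidth, widthAlong_homothety _ c ht]
  rw [← smul_eq_mul, ← Real.sInf_smul_of_nonneg ht]
  congr 1
  ext w
  simp [mem_smul_set, eq_comm]

theorem add_smul_single_mem_closedBall (p : Fin d → ℝ) {δ : ℝ} (hδ : 0 ≤ δ) (j : Fin d) :
    p + δ • Pi.single j 1 ∈ closedBall p δ := by
  rw [mem_closedBall, dist_eq_norm, add_sub_cancel_left, norm_smul, Pi.norm_single, norm_one,
    mul_one, Real.norm_of_nonneg hδ]

theorem latticeWidth_pos (hd : 0 < d) {K : Set (Fin d → ℝ)} (hK : IsCompact K)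
    (hint : (interior K).Nonempty) : 0 < latticeWidth K := by
  obtain ⟨c, hc⟩ := hint
  obtain ⟨ε, hε, hball⟩ := nhds_basis_closedBall.mem_iff.1 (mem_interior_iff_mem_nhds.1 hc)
  have hwidth : ∀ u : Fin d → ℤ, u ≠ 0 → ε ≤ widthAlong u K := by
    intro u hu
    obtain ⟨i, hi⟩ := Function.ne_iff.1 hu
    have hx : c + ε • Pi.single i 1 ∈ K := hball (add_smul_single_mem_closedBall c hε.le i)
    calc ε ≤ ε * |(u i : ℝ)| := le_mul_of_one_le_right hε.le (by exact_mod_cast Int.one_le_abs hi)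
      _ = |(fun i => (u i : ℝ)) ⬝ᵥ ((c + ε • Pi.single i 1) - c)| := by
          simp [abs_mul, abs_of_pos hε]
      _ ≤ widthAlong u K := le_widthAlong u hK hx (hball (mem_closedBall_self hε.le))
  refine hε.trans_le (le_csInf ⟨_, Pi.single ⟨0, hd⟩ 1, by simp, rfl⟩ ?_)
  rintro _ ⟨u, hu, rfl⟩
  exact hwidth u hu

theorem abs_apply_le_of_mapsTo_closedBall {N : Matrix (Fin d) (Fin d) ℝ} {b p : Fin d → ℝ}
    {X : Set (Fin d → ℝ)} {δ R : ℝ} (hδ : 0 < δ) (hX : closedBall p δ ⊆ X)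
    (hN : MapsTo (fun x => N *ᵥ x + b) X (closedBall 0 R)) (i j : Fin d) :
    |N i j| ≤ 2 * R / δ := by
  have hx := hN (hX (add_smul_single_mem_closedBall p hδ.le j))
  have hp := hN (hX (mem_closedBall_self hδ.le))
  rw [mem_closedBall_zero_iff] at hx hp
  rw [le_div_iff₀ hδ]
  calc |N i j| * δ = |(N *ᵥ (p + δ • Pi.single j 1) + b - (N *ᵥ p + b)) i| := by
        simp [mulVec_add, mulVec_smul, abs_mul, abs_of_pos hδ, mul_comm]
    _ ≤ ‖N *ᵥ (p + δ • Pi.single j 1) + b - (N *ᵥ p + b)‖ :=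
        (Real.norm_eq_abs _).symm.trans_le (norm_le_pi_norm _ i)
    _ ≤ 2 * R := by linarith [norm_sub_le (N *ᵥ (p + δ • Pi.single j 1) + b) (N *ᵥ p + b)]

theorem finite_setOf_intMatrix_mapsTo {X B : Set (Fin d → ℝ)} (hX : (interior X).Nonempty)
    (hB : Bornology.IsBounded B) :
    {M : Matrix (Fin d) (Fin d) ℤ |
      ∃ b, MapsTo (fun x => M.map (fun z : ℤ => (z : ℝ)) *ᵥ x + b) X B}.Finite := by
  obtain ⟨p, hp⟩ := hX
  obtain ⟨δ, hδ, hball⟩ := nhds_basis_closedBall.mem_iff.1 (mem_interior_iff_mem_nhds.1 hp)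
  obtain ⟨R, hR⟩ := hB.subset_closedBall 0
  refine (Set.finite_Icc (-fun _ _ => ⌈2 * R / δ⌉ : Fin d → Fin d → ℤ)
    fun _ _ => ⌈2 * R / δ⌉).subset ?_
  rintro M ⟨b, hM⟩
  have hC : ∀ i j, |M i j| ≤ ⌈2 * R / δ⌉ := fun i j => by
    have h := abs_apply_le_of_mapsTo_closedBall hδ hball (hM.mono_right hR) i j
    exact_mod_cast (show |(M i j : ℝ)| ≤ 2 * R / δ from h).trans (Int.le_ceil _)
  exact ⟨fun i j => (abs_le.1 (hC i j)).1, fun i j => (abs_le.1 (hC i j)).2⟩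

theorem exists_mulVec_add_mapsTo_iInter {A : Set ℝ} (hA : IsClosed A)
    (N : Matrix (Fin d) (Fin d) ℝ) {X : Set (Fin d → ℝ)} (hX : X.Nonempty)
    {K : ℕ → Set (Fin d → ℝ)} (hanti : Antitone K) (hK0 : IsCompact (K 0))
    (hK : ∀ n, IsClosed (K n)) (hfreq : ∃ᶠ n in atTop, ∃ b : Fin d → ℝ, (∀ i, b i ∈ A) ∧
      MapsTo (fun x => N *ᵥ x + b) X (K n)) :
    ∃ b : Fin d → ℝ, (∀ i, b i ∈ A) ∧ MapsTo (fun x => N *ᵥ x + b) X (⋂ n, K n) := by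
  obtain ⟨p, hp⟩ := hX
  set S : ℕ → Set (Fin d → ℝ) := fun n =>
    {b | ∀ i, b i ∈ A} ∩ {b | MapsTo (fun x => N *ᵥ x + b) X (K n)}
  have hA' : IsClosed {b : Fin d → ℝ | ∀ i, b i ∈ A} := by
    rw [ofPred_forall]
    exact isClosed_iInter fun i => hA.preimage (continuous_apply i)
  have hS : ∀ n, IsClosed (S n) := fun n =>
    hA'.inter (IsClosed.setOfPred_mapsTo (f := fun b x => N *ᵥ x + b) (hK n) fun x _ => by
      fun_prop)
  have hS0 : IsCompact (S 0) := by
    refine isCompact_of_isClosed_isBounded (hS 0) <|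
      (hK0.image (continuous_sub_right (N *ᵥ p))).isBounded.subset fun b hb => ?_
    exact ⟨N *ᵥ p + b, hb.2 hp, add_sub_cancel_left _ _⟩
  have hSne : ∀ n, (S n).Nonempty := fun n => by
    obtain ⟨m, hnm, b, hb, hmaps⟩ := hfreq.forall_exists_of_atTop n
    exact ⟨b, hb, hmaps.mono_right (hanti hnm)⟩
  obtain ⟨b, hb⟩ := hS0.nonempty_iInter_of_sequence_nonempty_isCompact_isClosed S
    (fun n b hb => ⟨hb.1, hb.2.mono_right (hanti n.le_succ)⟩) hSne hS
  exact ⟨b, (mem_iInter.1 hb 0).1, mapsTo_iInter.2 fun n => (mem_iInter.1 hb n).2⟩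

theorem containsCopy_iInter {A : Set ℝ} (hA : IsClosed A) {X : Set (Fin d → ℝ)}
    (hX : (interior X).Nonempty) {K : ℕ → Set (Fin d → ℝ)} (hanti : Antitone K)
    (hK0 : IsCompact (K 0)) (hK : ∀ n, IsClosed (K n)) (hcopy : ∀ n, ContainsCopy A X (K n)) :
    ContainsCopy A X (⋂ n, K n) := by
  choose M b hdet hb hmaps using fun n => containsCopy_iff.1 (hcopy n)
  obtain ⟨M₀, -, hM₀⟩ := ((finite_setOf_intMatrix_mapsTo hX hK0.isBounded).frequently_exists
    (p := fun M' n => M n = M')).1 <| Frequently.of_forall (f := atTop) fun n =>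
      ⟨M n, ⟨b n, (hmaps n).mono_right (hanti n.zero_le)⟩, rfl⟩
  obtain ⟨n, hn⟩ := hM₀.exists
  obtain ⟨β, hβ, hmapsβ⟩ := exists_mulVec_add_mapsTo_iInter hA _ (hX.mono interior_subset) hanti
    hK0 hK (hM₀.mono fun n hn => ⟨b n, hb n, hn ▸ hmaps n⟩)
  exact containsCopy_iff.2 ⟨M₀, β, hn ▸ hdet n, hβ, hmapsβ⟩

theorem exists_homothety_not_containsCopy {A : Set ℝ} (hA : IsClosed A) {X K : Set (Fin d → ℝ)}
    (hX : (interior X).Nonempty) (hKconv : Convex ℝ K) (hK : IsCompact K) {c : Fin d → ℝ}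
    (hc : c ∈ K) (hfree : ¬ ContainsCopy A X K) :
    ∃ t : ℝ, 1 < t ∧ ¬ ContainsCopy A X (homothety c t '' K) := by
  by_contra! hcopy
  set t : ℕ → ℝ := fun n => 1 + 1 / ((n : ℝ) + 1)
  have ht : ∀ n, 1 < t n := fun n => lt_add_of_pos_right 1 Nat.one_div_pos_of_nat
  have hanti : Antitone fun n => homothety c (t n) '' K := fun m n hmn =>
    hKconv.image_homothety_mono hc (by linarith [ht n]) (by simp only [t]; gcongr)
  have hlim : Tendsto t atTop (𝓝 1) := by
    simpa only [t, add_zero] using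
      (tendsto_one_div_add_atTop_nhds_zero_nat (𝕜 := ℝ)).const_add 1
  have hcompact : ∀ n, IsCompact (homothety c (t n) '' K) := fun n =>
    hK.image (homothety_continuous c _)
  exact hfree <| (containsCopy_iInter hA hX hanti (hcompact 0) (fun n => (hcompact n).isClosed)
    fun n => hcopy _ (ht n)).mono (hK.isClosed.iInter_image_homothety_subset c hlim)

theorem IsConvexBody.image_homothety {K : Set (Fin d → ℝ)} (hK : IsConvexBody K) (c : Fin d → ℝ)
    (t : ℝ) : IsConvexBody (homothety c t '' K) :=
  ⟨hK.1.affine_image _, hK.2.1.image (homothety_continuous c t), hK.2.2.image _⟩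

theorem latticeWidth_le_Flt {A : Set ℝ} {X K : Set (Fin d → ℝ)} (hK : IsConvexBody K)
    (hfree : ¬ ContainsCopy A X K) (hFlt : 0 < Flt d A X) : latticeWidth K ≤ Flt d A X := by
  refine le_csSup ?_ ⟨K, hK, hfree, rfl⟩
  by_contra hbdd
  rw [Flt, Real.sSup_of_not_bddAbove hbdd] at hFlt
  exact lt_irrefl 0 hFlt

end

/-- A full-dimensional convex body whose lattice width equals the generalised flatness
constant `Flt_d^A(X)` contains an `A`-unimodular copy of `X`. -/
theorem width_eq_flt_containsCopy (d : ℕ) (A : Set ℝ) (hA : A = ZSet ∨ A = Set.univ)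
    (K X : Set (Fin d → ℝ))
    (hK : IsConvexBody K) (hKfull : affineSpan ℝ K = ⊤)
    (hX : IsConvexBody X) (hXfull : affineSpan ℝ X = ⊤)
    (hw : latticeWidth K = Flt d A X) :
    ContainsCopy A X K := by
  by_contra hfree
  obtain rfl | hd := Nat.eq_zero_or_pos d
  · exact hfree (containsCopy_of_fin_zero A X hK.2.2)
  have hAcl : IsClosed A := hA.elim (· ▸ isClosed_ZSet) (· ▸ isClosed_univ)
  have hKint := hK.1.interior_nonempty_iff_affineSpan_eq_top.2 hKfull
  have hXint := hX.1.interior_nonempty_iff_affineSpan_eq_top.2 hXfull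
  have hpos : 0 < latticeWidth K := latticeWidth_pos hd hK.2.1 hKint
  obtain ⟨c, hc⟩ := hK.2.2
  obtain ⟨t, ht, htfree⟩ := exists_homothety_not_containsCopy hAcl hXint hK.1 hK.2.1 hc hfree
  have hle := latticeWidth_le_Flt (hK.image_homothety c t) htfree (hw ▸ hpos)
  rw [latticeWidth_homothety c (by linarith) K, ← hw] at hle
  exact hle.not_gt (lt_mul_of_one_lt_left hpos ht)
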